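/- (Mapping theorem for importance sampling, convergence in mean.) Assume in addition that Q(H) = 1, and let X' : Ω' → ℝ be such that ω ↦ X'(f(ω)) W(ω) is Q-integrable. Let (ω_i)_{i≥1} be an independent, identically distributed sequence of Ω-valued random variables with common law Q. Then E| r⁻¹ Σ_{i=1}^{r} X'(f(ω_i)) W(ω_i) − E_P[X'; H'] | → 0 as r → ∞, where E_P[X'; H'] = Σ_{ω' ∈ H'} X'(ω') P{ω'}. -/

import Mathlib

open MeasureTheory ENNReal ProbabilityTheory Filter

/-!
On the event `H'`, the target `P` is absolutely continuous with respect to the law `Q ∘ f⁻¹`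
of `f`, with density `P{ω'} / Q(f⁻¹{ω'})`; since `Q` is carried by `f⁻¹(H')`, this density
composed with `f` is the weight `W`, so `E_Q[X' ∘ f · W] = E_P[X'; H']`. The `L¹` strong law of
large numbers for the i.i.d. sequence `X'(f(ωᵢ)) W(ωᵢ)` then gives convergence in mean.
-/

section ImportanceWeight

variable {Ω Ω' : Type*} [MeasurableSpace Ω] [MeasurableSpace Ω']

noncomputable def importanceWeight (Q : Measure Ω) (P : Measure Ω') (f : Ω → Ω') (ω' : Ω') :
    ℝ≥0∞ :=
  if Q (f ⁻¹' {ω'}) = 0 then 0 else P {ω'} / Q (f ⁻¹' {ω'})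

lemma importanceWeight_ne_top (Q : Measure Ω) (P : Measure Ω') [IsFiniteMeasure P]
    (f : Ω → Ω') (ω' : Ω') : importanceWeight Q P f ω' ≠ ∞ := by
  unfold importanceWeight
  split_ifs with h
  · exact zero_ne_top
  · exact (ENNReal.div_lt_top (measure_ne_top _ _) h).ne

variable [Countable Ω] [MeasurableSingletonClass Ω] [Countable Ω'] [MeasurableSingletonClass Ω']
  {Q : Measure Ω} {P : Measure Ω'} {f : Ω → Ω'} {H' : Set Ω'}

lemma restrict_eq_withDensity_importanceWeight [IsFiniteMeasure Q]
    (habs : ∀ ω' ∈ H', Q (f ⁻¹' {ω'}) = 0 → P {ω'} = 0) (hH : ∀ᵐ ω ∂Q, f ω ∈ H') :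
    P.restrict H' = (Q.map f).withDensity (importanceWeight Q P f) := by
  refine Measure.ext_of_singleton fun ω' => ?_
  rw [Measure.restrict_apply (MeasurableSet.singleton _),
    withDensity_apply _ (MeasurableSet.singleton _), lintegral_singleton,
    Measure.map_apply (measurable_of_countable f) (MeasurableSet.singleton _)]
  by_cases hmem : ω' ∈ H'
  · rw [Set.singleton_inter_of_mem hmem, importanceWeight]
    split_ifs with h
    · rw [habs ω' hmem h, h, mul_zero]
    · rw [ENNReal.div_mul_cancel h (measure_ne_top _ _)]
  · have hnull : Q (f ⁻¹' {ω'}) = 0 :=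
      measure_mono_null (fun ω (hω : f ω = ω') => (hω ▸ hmem : f ω ∉ H')) (ae_iff.1 hH)
    rw [Set.singleton_inter_of_notMem hmem, hnull, mul_zero, measure_empty]

theorem setIntegral_eq_integral_mul_importanceWeight [IsFiniteMeasure Q] [IsFiniteMeasure P]
    (habs : ∀ ω' ∈ H', Q (f ⁻¹' {ω'}) = 0 → P {ω'} = 0) (hH : ∀ᵐ ω ∂Q, f ω ∈ H')
    (X' : Ω' → ℝ) :
    ∫ ω' in H', X' ω' ∂P = ∫ ω, X' (f ω) * (importanceWeight Q P f (f ω)).toReal ∂Q := by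
  rw [restrict_eq_withDensity_importanceWeight habs hH,
    integral_withDensity_eq_integral_toReal_smul (measurable_of_countable _)
      (ae_of_all _ fun ω' => (importanceWeight_ne_top Q P f ω').lt_top),
    integral_map (measurable_of_countable f).aemeasurable
      (measurable_of_countable _).aestronglyMeasurable]
  simp only [smul_eq_mul, mul_comm]

end ImportanceWeight

section LawOfLargeNumbers

variable {Θ : Type*} [MeasurableSpace Θ] {μ : Measure Θ}
  {E : Type*} [NormedAddCommGroup E] [NormedSpace ℝ E] [CompleteSpace E]
  [MeasurableSpace E] [BorelSpace E]

theorem tendsto_integral_norm_average_sub_integral {X : ℕ → Θ → E} (hint : Integrable (X 0) μ)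
    (hindep : Pairwise (Function.onFun (IndepFun · · μ) X)) (hident : ∀ i, IdentDistrib (X i) (X 0) μ μ) :
    Tendsto (fun n : ℕ => ∫ θ, ‖(n : ℝ)⁻¹ • ∑ i ∈ Finset.range n, X i θ - μ[X 0]‖ ∂μ)
      atTop (nhds 0) := by
  have hL1 := (ENNReal.tendsto_toReal zero_ne_top).comp
    (strong_law_Lp le_rfl one_ne_top X (memLp_one_iff_integrable.2 hint) hindep hident)
  refine hL1.congr fun n => ?_
  have hmeas : AEStronglyMeasurable
      (fun θ => (n : ℝ)⁻¹ • ∑ i ∈ Finset.range n, X i θ - μ[X 0]) μ :=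
    ((Finset.aestronglyMeasurable_fun_sum _ fun i _ =>
      ((hident i).integrable_iff.2 hint).1).const_smul _).sub aestronglyMeasurable_const
  rw [Function.comp_apply, eLpNorm_one_eq_lintegral_enorm, integral_norm_eq_lintegral_enorm hmeas]

theorem tendsto_integral_norm_average_comp_sub_integral [SecondCountableTopology E]
    {Ω : Type*} [MeasurableSpace Ω]
    {Q : Measure Ω} {ωs : ℕ → Θ → Ω} (hmeas : ∀ i, Measurable (ωs i))
    (hlaw : ∀ i, μ.map (ωs i) = Q) (hindep : iIndepFun ωs μ)
    {g : Ω → E} (hg : Measurable g) (hint : Integrable g Q) :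
    Tendsto (fun n : ℕ => ∫ θ, ‖(n : ℝ)⁻¹ • ∑ i ∈ Finset.range n, g (ωs i θ) - ∫ ω, g ω ∂Q‖ ∂μ)
      atTop (nhds 0) := by
  have hident : ∀ i, IdentDistrib (ωs i) (ωs 0) μ μ := fun i =>
    ⟨(hmeas i).aemeasurable, (hmeas 0).aemeasurable, by rw [hlaw i, hlaw 0]⟩
  have hmean : μ[fun θ => g (ωs 0 θ)] = ∫ ω, g ω ∂Q := by
    rw [← hlaw 0, integral_map (hmeas 0).aemeasurable hg.aestronglyMeasurable]
  rw [← hmean]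
  refine tendsto_integral_norm_average_sub_integral (X := fun i θ => g (ωs i θ)) ?_
    (fun i j hij => (hindep.indepFun hij).comp hg hg) (fun i => (hident i).comp hg)
  exact (integrable_map_measure hg.aestronglyMeasurable (hmeas 0).aemeasurable).1 (hlaw 0 ▸ hint)

end LawOfLargeNumbers

theorem stmt_2_general
    {Ω Ω' : Type*} [Countable Ω] [Countable Ω']
    [MeasurableSpace Ω] [MeasurableSingletonClass Ω]
    [MeasurableSpace Ω'] [MeasurableSingletonClass Ω']
    (Q : Measure Ω) [IsProbabilityMeasure Q]
    (P : Measure Ω') [IsProbabilityMeasure P]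
    (f : Ω → Ω') (H' : Set Ω')
    (habs : ∀ ω' ∈ H', Q (f ⁻¹' {ω'}) = 0 → P {ω'} = 0)
    (W : Ω → ℝ≥0∞)
    (hW : ∀ ω, W ω = if Q (f ⁻¹' {f ω}) = 0 then 0 else P {f ω} / Q (f ⁻¹' {f ω}))
    (hH : Q (f ⁻¹' H') = 1)
    (X' : Ω' → ℝ)
    (hint : Integrable (fun ω => X' (f ω) * (W ω).toReal) Q)
    {Θ : Type*} [MeasurableSpace Θ] (μ : Measure Θ)
    (ωs : ℕ → Θ → Ω)
    (hmeas : ∀ i, Measurable (ωs i))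
    (hlaw : ∀ i, Measure.map (ωs i) μ = Q)
    (hindep : iIndepFun ωs μ) :
    Tendsto
      (fun r : ℕ => ∫ θ,
        |(∑ i ∈ Finset.range r, X' (f (ωs i θ)) * (W (ωs i θ)).toReal) / r
          - ∫ ω' in H', X' ω' ∂P| ∂μ)
      atTop (nhds 0) := by
  obtain rfl : W = fun ω => importanceWeight Q P f (f ω) := funext hW
  have hH_ae : ∀ᵐ ω ∂Q, f ω ∈ H' :=
    (mem_ae_iff_prob_eq_one (Set.to_countable _).measurableSet).2 hH
  rw [setIntegral_eq_integral_mul_importanceWeight habs hH_ae]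
  refine (tendsto_integral_norm_average_comp_sub_integral hmeas hlaw hindep
    (measurable_of_countable _) hint).congr fun r => ?_
  simp only [Real.norm_eq_abs, smul_eq_mul, inv_mul_eq_div]

/-- Mapping theorem for importance sampling: convergence in mean. -/
theorem stmt_2
    {Ω Ω' : Type*} [Countable Ω] [Countable Ω']
    [MeasurableSpace Ω] [MeasurableSingletonClass Ω]
    [MeasurableSpace Ω'] [MeasurableSingletonClass Ω']
    (Q : Measure Ω) [IsProbabilityMeasure Q]
    (P : Measure Ω') [IsProbabilityMeasure P]
    (f : Ω → Ω') (H' : Set Ω')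
    (habs : ∀ ω' ∈ H', Q (f ⁻¹' {ω'}) = 0 → P {ω'} = 0)
    (W : Ω → ℝ≥0∞)
    (hW : ∀ ω, W ω = if Q (f ⁻¹' {f ω}) = 0 then 0 else P {f ω} / Q (f ⁻¹' {f ω}))
    (hH : Q (f ⁻¹' H') = 1)
    (X' : Ω' → ℝ)
    (hint : Integrable (fun ω => X' (f ω) * (W ω).toReal) Q)
    {Θ : Type*} [MeasurableSpace Θ] (μ : Measure Θ) [IsProbabilityMeasure μ]
    (ωs : ℕ → Θ → Ω)
    (hmeas : ∀ i, Measurable (ωs i))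
    (hlaw : ∀ i, Measure.map (ωs i) μ = Q)
    (hindep : iIndepFun ωs μ) :
    Tendsto
      (fun r : ℕ => ∫ θ,
        |(∑ i ∈ Finset.range r, X' (f (ωs i θ)) * (W (ωs i θ)).toReal) / r
          - ∫ ω' in H', X' ω' ∂P| ∂μ)
      atTop (nhds 0) :=
  stmt_2_general Q P f H' habs W hW hH X' hint μ ωs hmeas hlaw hindep
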